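/- For probability measures: a mixed Poisson measure μ_{λ,σ} = ∫ π_{zσ} λ(dz) (σ an infinite, σ-finite diffuse measure) is an extreme point of the convex set of mixed Poisson measures with intensity proportional to σ if and only if λ = δ_z for some z ∈ [0,∞), i.e., the extreme points are exactly the pure Poisson measures π_{zσ}. -/

import Mathlib

open MeasureTheory ProbabilityTheory
open scoped ENNReal NNReal

/-- `π` is a Poisson point process with intensity `σ`: a probability measure on the
space of (configuration) measures on `X` such that for every measurable set `A` of finite
intensity the number of points in `A` is Poisson distributed with mean `σ A`, and the
counts on pairwise disjoint measurable sets are independent. -/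
def IsPoissonPP {X : Type*} [MeasurableSpace X] (σ : Measure X)
    (π : Measure (Measure X)) : Prop :=
  IsProbabilityMeasure π ∧
  (∀ A : Set X, MeasurableSet A → σ A ≠ ⊤ → ∀ k : ℕ,
      π {γ : Measure X | γ A = k} =
        ENNReal.ofReal (Real.exp (-(σ A).toReal) * (σ A).toReal ^ k / (Nat.factorial k))) ∧
  (∀ (ι : Type) (A : ι → Set X), (∀ i, MeasurableSet (A i)) →
      Pairwise (Function.onFun Disjoint A) →
      iIndepFun (fun i (γ : Measure X) => γ (A i)) π)
/-- `μ` is an extreme point of the set `S` of (probability) measures. -/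
def MeasureExtremePoint {Ω : Type*} [MeasurableSpace Ω] (S : Set (Measure Ω))
    (μ : Measure Ω) : Prop :=
  μ ∈ S ∧ ∀ μ₁ ∈ S, ∀ μ₂ ∈ S, ∀ t : ℝ≥0∞, 0 < t → t < 1 →
    μ = t • μ₁ + (1 - t) • μ₂ → μ₁ = μ ∧ μ₂ = μ

/-!
Mixing `λ ↦ μ_{λ,σ} = λ.bind P` is affine, and it is injective because the intensity can be read
off a single configuration: since `σ` is diffuse and infinite, `X` contains disjoint sets `Aᵢ` of
`σ`-measure one, under `π_{zσ}` the counts `γ (Aᵢ)` are i.i.d. Poisson with mean `z`, and by the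
strong law of large numbers their running averages converge to `z` almost surely. The resulting
measurable `T` with `T = z` a.s. under `π_{zσ}` satisfies `T_* μ_{λ,σ} = λ`. Hence the extreme
mixed Poisson measures correspond to the extreme probability measures on `ℝ≥0`, which are the
Dirac masses: a non-Dirac law charges some set `B` with mass strictly between `0` and `1`, and
splits into its conditional laws on `B` and `Bᶜ`.
-/
open Filter Set Function
open scoped Topology

namespace MeasureTheory.Measure

variable {α β : Type*} [MeasurableSpace α] [MeasurableSpace β]

lemma add_bind (m₁ m₂ : Measure α) {f : α → Measure β} (hf : Measurable f) :
    (m₁ + m₂).bind f = m₁.bind f + m₂.bind f := by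
  ext s hs
  simp only [add_apply, bind_apply hs hf.aemeasurable, lintegral_add_measure]

lemma map_bind_of_ae_eq {P : α → Measure β} (hP : Measurable P)
    [∀ a, IsProbabilityMeasure (P a)] {T : β → α} (hT : Measurable T)
    (hTP : ∀ a, ∀ᵐ b ∂P a, T b = a) (m : Measure α) : (m.bind P).map T = m := by
  have hPT : ∀ a, (P a).map T = dirac a := fun a => by
    rw [map_congr (hTP a), map_const, measure_univ, one_smul]
  rw [← bind_dirac_eq_map _ hT,
    bind_bind (g := fun b => dirac (T b)) hP.aemeasurable (measurable_dirac.comp hT).aemeasurable]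
  simp_rw [bind_dirac_eq_map _ hT, hPT, bind_dirac]

lemma bind_injective_of_ae_eq {P : α → Measure β} (hP : Measurable P)
    [∀ a, IsProbabilityMeasure (P a)] {T : β → α} (hT : Measurable T)
    (hTP : ∀ a, ∀ᵐ b ∂P a, T b = a) : Injective fun m : Measure α => m.bind P :=
  LeftInverse.injective (g := fun μ : Measure β => μ.map T) fun m => map_bind_of_ae_eq hP hT hTP m

lemma eq_map_of_measure_singleton_eq [Countable α] [MeasurableSingletonClass α] {c : α → β}
    (hc : MeasurableEmbedding c) (ν : Measure α) [IsProbabilityMeasure ν] (ρ : Measure β)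
    [IsProbabilityMeasure ρ] (h : ∀ a, ρ {c a} = ν {a}) : ρ = ν.map c := by
  have hcomap : ρ.comap c = ν := ext_iff_singleton.2 fun a => by
    rw [hc.comap_apply, image_singleton, h]
  have hrange : ρ.restrict (range c) = ν.map c := by rw [← hc.map_comap, hcomap]
  have hfull : ρ (range c)ᶜ = 0 := by
    rw [prob_compl_eq_zero_iff hc.measurableSet_range, ← restrict_apply_univ, hrange,
      map_apply hc.measurable MeasurableSet.univ, preimage_univ, measure_univ]
  rw [← hrange, restrict_eq_self_of_ae_mem (s := range c) (mem_ae_iff.2 hfull)]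

end MeasureTheory.Measure

section ExtremePoint

open ProbabilityTheory

variable {α β : Type*} [MeasurableSpace α] [MeasurableSpace β]

lemma measureExtremePoint_image_iff {F : Measure α → Measure β} (hF : Injective F)
    (hF_affine : ∀ (t : ℝ≥0∞) μ₁ μ₂, F (t • μ₁ + (1 - t) • μ₂) = t • F μ₁ + (1 - t) • F μ₂)
    {S : Set (Measure α)} {μ : Measure α} :
    MeasureExtremePoint (F '' S) (F μ) ↔ MeasureExtremePoint S μ := by
  constructor
  · rintro ⟨hμ, hext⟩
    refine ⟨hF.mem_set_image.1 hμ, fun μ₁ h₁ μ₂ h₂ t ht₀ ht₁ hμt => ?_⟩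
    obtain ⟨e₁, e₂⟩ := hext _ (mem_image_of_mem F h₁) _ (mem_image_of_mem F h₂) t ht₀ ht₁
      (by rw [hμt, hF_affine])
    exact ⟨hF e₁, hF e₂⟩
  · rintro ⟨hμ, hext⟩
    refine ⟨mem_image_of_mem F hμ, ?_⟩
    rintro _ ⟨μ₁, h₁, rfl⟩ _ ⟨μ₂, h₂, rfl⟩ t ht₀ ht₁ hμt
    obtain ⟨e₁, e₂⟩ := hext μ₁ h₁ μ₂ h₂ t ht₀ ht₁ (hF (hμt.trans (hF_affine t μ₁ μ₂).symm))
    exact ⟨congrArg F e₁, congrArg F e₂⟩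

lemma MeasureExtremePoint.isZeroOneMeasure {μ : Measure α}
    (h : MeasureExtremePoint {ν | IsProbabilityMeasure ν} μ) : IsZeroOneMeasure μ := by
  have : IsProbabilityMeasure μ := h.1
  refine ⟨fun B hB => ?_⟩
  by_contra! hB01
  set t := μ B
  have ht₁ : t < 1 := lt_of_le_of_ne prob_le_one hB01.2
  have hBc : μ Bᶜ = 1 - t := prob_compl_eq_one_sub hB
  have hBc₀ : μ Bᶜ ≠ 0 := hBc ▸ (tsub_pos_of_lt ht₁).ne'
  have hdecomp : μ = t • μ[|B] + (1 - t) • μ[|Bᶜ] := by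
    ext s hs
    rw [Measure.add_apply, Measure.smul_apply, Measure.smul_apply, smul_eq_mul, smul_eq_mul,
      ← hBc, mul_comm t, mul_comm (μ Bᶜ), cond_add_cond_compl_eq hB]
  obtain ⟨hcond, -⟩ := h.2 _ (cond_isProbabilityMeasure hB01.1) _
    (cond_isProbabilityMeasure hBc₀) t (pos_iff_ne_zero.2 hB01.1) ht₁ hdecomp
  have hcond_compl : μ[Bᶜ|B] = 0 := by
    rw [cond_apply hB, inter_compl_self, measure_empty, mul_zero]
  exact hBc₀ (hcond ▸ hcond_compl)

lemma eq_dirac_of_measure_compl_singleton [MeasurableSingletonClass α] {μ : Measure α}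
    [IsProbabilityMeasure μ] {x : α} (h : μ {x}ᶜ = 0) : μ = Measure.dirac x := by
  rw [← Measure.restrict_eq_self_of_ae_mem (s := {x}) (mem_ae_iff.2 h),
    Measure.restrict_singleton, (prob_compl_eq_zero_iff (measurableSet_singleton x)).1 h, one_smul]

lemma measureExtremePoint_dirac [MeasurableSingletonClass α] (x : α) :
    MeasureExtremePoint {ν : Measure α | IsProbabilityMeasure ν} (Measure.dirac x) := by
  refine ⟨inferInstanceAs (IsProbabilityMeasure (Measure.dirac x)), ?_⟩
  rintro μ₁ (h₁ : IsProbabilityMeasure μ₁) μ₂ (h₂ : IsProbabilityMeasure μ₂) t ht₀ ht₁ hx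
  have hcompl : t * μ₁ {x}ᶜ + (1 - t) * μ₂ {x}ᶜ = 0 := by
    simpa using (congrArg (fun μ => μ {x}ᶜ) hx).symm
  obtain ⟨h₁x, h₂x⟩ := add_eq_zero.1 hcompl
  exact ⟨eq_dirac_of_measure_compl_singleton ((mul_eq_zero.1 h₁x).resolve_left ht₀.ne'),
    eq_dirac_of_measure_compl_singleton
      ((mul_eq_zero.1 h₂x).resolve_left (tsub_pos_of_lt ht₁).ne')⟩

lemma measureExtremePoint_isProbabilityMeasure_iff [StandardBorelSpace α] {μ : Measure α} :
    MeasureExtremePoint {ν | IsProbabilityMeasure ν} μ ↔ ∃ x, μ = Measure.dirac x := by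
  refine ⟨fun h => ?_, fun ⟨x, hx⟩ => hx ▸ measureExtremePoint_dirac x⟩
  have : IsProbabilityMeasure μ := h.1
  have := h.isZeroOneMeasure
  exact IsZeroOneMeasure.exists_eq_dirac

end ExtremePoint

section Sierpinski

open ProbabilityTheory

lemma continuous_cdf (μ : Measure ℝ) [IsProbabilityMeasure μ] [NullSingletonClass μ] :
    Continuous (cdf μ) := by
  refine continuous_iff_continuousAt.2 fun x => ?_
  rw [(monotone_cdf μ).continuousAt_iff_leftLim_eq_rightLim, StieltjesFunction.rightLim_eq]
  have hjump := (cdf μ).measure_singleton x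
  rw [measure_cdf, measure_singleton, eq_comm, ENNReal.ofReal_eq_zero, sub_nonpos] at hjump
  exact le_antisymm ((monotone_cdf μ).leftLim_le le_rfl) hjump

lemma exists_measure_Iic_eq (μ : Measure ℝ) [IsProbabilityMeasure μ] [NullSingletonClass μ]
    {t : ℝ≥0∞} (ht₀ : 0 < t) (ht₁ : t < 1) : ∃ x, μ (Iic x) = t := by
  have ht_top : t ≠ ∞ := (ht₁.trans_le le_top).ne
  have hlow : ∃ a, cdf μ a ≤ t.toReal := ((tendsto_cdf_atBot μ).eventually
    (ge_mem_nhds (ENNReal.toReal_pos ht₀.ne' ht_top))).exists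
  have hhigh : ∃ b, t.toReal ≤ cdf μ b := ((tendsto_cdf_atTop μ).eventually
    (le_mem_nhds (ENNReal.toReal_lt_of_lt_ofReal (by simpa using ht₁)))).exists
  obtain ⟨x, hx⟩ := mem_range_of_exists_le_of_exists_ge (continuous_cdf μ) hlow hhigh
  exact ⟨x, by rw [← ofReal_cdf, hx, ENNReal.ofReal_toReal ht_top]⟩

lemma exists_subset_measure_eq {X : Type*} [MeasurableSpace X] [StandardBorelSpace X]
    (μ : Measure X) [NullSingletonClass μ] {s : Set X} (hs : MeasurableSet s) (hμs : μ s ≠ ∞)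
    {r : ℝ≥0∞} (hr : r ≤ μ s) : ∃ t ⊆ s, MeasurableSet t ∧ μ t = r := by
  rcases eq_or_ne r 0 with rfl | hr₀
  · exact ⟨∅, empty_subset s, .empty, measure_empty⟩
  rcases hr.eq_or_lt with rfl | hr_lt
  · exact ⟨s, subset_rfl, hs, rfl⟩
  have hμs₀ : μ s ≠ 0 := (pos_of_ne_zero hr₀ |>.trans hr_lt).ne'
  obtain ⟨f, hf⟩ := exists_measurableEmbedding_real X
  have := cond_isProbabilityMeasure_of_finite hμs₀ hμs
  let ν : Measure ℝ := (μ[|s]).map f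
  have hν : ∀ u, MeasurableSet u → ν u = (μ s)⁻¹ * μ (s ∩ f ⁻¹' u) := fun u hu => by
    rw [Measure.map_apply hf.measurable hu, cond_apply hs]
  have : NullSingletonClass ν := ⟨fun y => by
    rw [hν _ (measurableSet_singleton y),
      ((subsingleton_singleton.preimage hf.injective).anti inter_subset_right).measure_zero μ,
      mul_zero]⟩
  have : IsProbabilityMeasure ν := Measure.isProbabilityMeasure_map hf.measurable.aemeasurable
  obtain ⟨x, hx⟩ := exists_measure_Iic_eq ν (ENNReal.div_pos hr₀ hμs)
    (ENNReal.div_lt_of_lt_mul (by rwa [one_mul]))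
  refine ⟨s ∩ f ⁻¹' Iic x, inter_subset_left, hs.inter (hf.measurable measurableSet_Iic), ?_⟩
  rwa [hν _ measurableSet_Iic, ENNReal.div_eq_inv_mul, ENNReal.mul_right_inj (by simpa) (by simpa)]
    at hx

end Sierpinski

section UnitSets

variable {X : Type*} [MeasurableSpace X] [StandardBorelSpace X] {μ : Measure X} [SigmaFinite μ]
  [NullSingletonClass μ]

lemma exists_disjoint_measure_eq_one (hμ : μ univ = ∞) {s : Set X} (hs : MeasurableSet s)
    (hμs : μ s ≠ ∞) : ∃ t, Disjoint s t ∧ MeasurableSet t ∧ μ t = 1 := by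
  have hμsc : μ sᶜ = ∞ := by
    by_contra h
    exact (ENNReal.add_ne_top.2 ⟨hμs, h⟩) (top_le_iff.1 (hμ ▸ measure_univ_le_add_compl s))
  obtain ⟨D, hD, hDs, hD₁, hD_fin⟩ :=
    Measure.exists_subset_measure_lt_top hs.compl (hμsc ▸ ENNReal.one_lt_top)
  obtain ⟨t, htD, ht, ht₁⟩ := exists_subset_measure_eq μ hD hD_fin.ne hD₁.le
  exact ⟨t, subset_compl_iff_disjoint_left.1 (htD.trans hDs), ht, ht₁⟩

lemma exists_pairwise_disjoint_measure_eq_one (hμ : μ univ = ∞) :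
    ∃ A : ℕ → Set X, (∀ n, MeasurableSet (A n)) ∧ Pairwise (Disjoint on A) ∧
      ∀ n, μ (A n) = 1 := by
  have hstep : ∀ s : {s : Set X // MeasurableSet s ∧ μ s ≠ ∞},
      ∃ s' : {s : Set X // MeasurableSet s ∧ μ s ≠ ∞}, s.1 ⊆ s'.1 ∧ μ (s'.1 \ s.1) = 1 := by
    rintro ⟨s, hs, hμs⟩
    obtain ⟨t, hst, ht, ht₁⟩ := exists_disjoint_measure_eq_one hμ hs hμs
    refine ⟨⟨s ∪ t, hs.union ht, measure_union_ne_top hμs (ht₁ ▸ ENNReal.one_ne_top)⟩,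
      subset_union_left, ?_⟩
    rwa [union_sdiff_left, hst.sdiff_eq_right]
  choose next hnext_sub hnext_one using hstep
  let B : ℕ → {s : Set X // MeasurableSet s ∧ μ s ≠ ∞} := fun n => next^[n] ⟨∅, .empty, by simp⟩
  have hB_succ (n : ℕ) : B (n + 1) = next (B n) := iterate_succ_apply' ..
  have hB_mono : Monotone fun n => (B n).1 :=
    monotone_nat_of_le_succ fun n => hB_succ n ▸ hnext_sub (B n)
  refine ⟨fun n => (B (n + 1)).1 \ (B n).1, fun n => (B (n + 1)).2.1.diff (B n).2.1,
    (pairwise_disjoint_on _).2 fun i j hij => ?_, fun n => ?_⟩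
  · exact (disjoint_sdiff_left.mono_right (sdiff_subset.trans (hB_mono hij))).symm
  · simpa only [hB_succ] using hnext_one (B n)

end UnitSets

section Poisson

open ProbabilityTheory Real
open scoped Nat

lemma hasSum_mul_poissonMeasure (r : ℝ≥0) :
    HasSum (fun n : ℕ => exp (-r) * r ^ n / n ! * n) r := by
  rw [← hasSum_nat_add_iff' 1, Finset.sum_range_one, Nat.cast_zero, mul_zero, sub_zero]
  refine (mul_one (r : ℝ) ▸ (hasSum_one_poissonMeasure r).mul_left (r : ℝ)).congr_fun fun n => ?_
  rw [Nat.factorial_succ]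
  push_cast
  field_simp
  ring

lemma integrable_id_map_cast_poissonMeasure (r : ℝ≥0) : Integrable id Po(ℝ, r) := by
  rw [integrable_map_measure aestronglyMeasurable_id .of_discrete, integrable_poissonMeasure_iff]
  simpa using (hasSum_mul_poissonMeasure r).summable

lemma integral_id_map_cast_poissonMeasure (r : ℝ≥0) : ∫ x, x ∂Po(ℝ, r) = r := by
  rw [integral_map (f := fun x : ℝ => x) .of_discrete aestronglyMeasurable_id,
    integral_poissonMeasure]
  simpa [mul_comm] using (hasSum_mul_poissonMeasure r).tsum_eq

end Poisson

noncomputable def empiricalIntensity {X : Type*} [MeasurableSpace X] (A : ℕ → Set X)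
    (γ : Measure X) (n : ℕ) : ℝ :=
  (∑ i ∈ Finset.range n, (γ (A i)).toReal) / n

lemma measurable_empiricalIntensity {X : Type*} [MeasurableSpace X] {A : ℕ → Set X}
    (hA : ∀ i, MeasurableSet (A i)) (n : ℕ) : Measurable fun γ => empiricalIntensity A γ n :=
  (Finset.measurable_sum _ fun i _ => (Measure.measurable_coe (hA i)).ennreal_toReal).div_const _

namespace IsPoissonPP

open ProbabilityTheory

variable {X : Type*} [MeasurableSpace X] {σ : Measure X} {π : Measure (Measure X)}

lemma map_apply_eq_map_cast_poissonMeasure (h : IsPoissonPP σ π) {A : Set X}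
    (hA : MeasurableSet A) {r : ℝ≥0} (hσA : σ A = r) :
    π.map (fun γ => γ A) = Po(ℝ≥0∞, r) := by
  have := h.1
  have := Measure.isProbabilityMeasure_map (μ := π) (Measure.measurable_coe hA).aemeasurable
  have hcast : MeasurableEmbedding (Nat.cast : ℕ → ℝ≥0∞) :=
    ⟨Nat.cast_injective, .of_discrete, fun s _ => (s.to_countable.image _).measurableSet⟩
  refine Measure.eq_map_of_measure_singleton_eq hcast _ _ fun k => ?_
  rw [Measure.map_apply (Measure.measurable_coe hA) (measurableSet_singleton _),
    poissonMeasure_singleton]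
  have hk := h.2.1 A hA (by simp [hσA]) k
  rw [hσA, ENNReal.coe_toReal] at hk
  exact hk

lemma map_toReal_apply_eq_map_cast_poissonMeasure (h : IsPoissonPP σ π) {A : Set X}
    (hA : MeasurableSet A) {r : ℝ≥0} (hσA : σ A = r) :
    π.map (fun γ => (γ A).toReal) = Po(ℝ, r) := by
  change π.map (ENNReal.toReal ∘ fun γ => γ A) = _
  rw [← Measure.map_map ENNReal.measurable_toReal (Measure.measurable_coe hA),
    h.map_apply_eq_map_cast_poissonMeasure hA hσA,
    Measure.map_map ENNReal.measurable_toReal .of_discrete]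
  simp [Function.comp_def]

lemma ae_tendsto_average (h : IsPoissonPP σ π) {A : ℕ → Set X} (hA : ∀ n, MeasurableSet (A n))
    (hA_disj : Pairwise (Disjoint on A)) {r : ℝ≥0} (hσA : ∀ n, σ (A n) = r) :
    ∀ᵐ γ ∂π, Tendsto (empiricalIntensity A γ) atTop (𝓝 r) := by
  let Y (i : ℕ) (γ : Measure X) : ℝ := (γ (A i)).toReal
  have hY (i : ℕ) : Measurable (Y i) := (Measure.measurable_coe (hA i)).ennreal_toReal
  have hlaw (i : ℕ) : π.map (Y i) = Po(ℝ, r) :=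
    h.map_toReal_apply_eq_map_cast_poissonMeasure (hA i) (hσA i)
  have hident (i : ℕ) : IdentDistrib (Y i) (Y 0) π π :=
    ⟨(hY i).aemeasurable, (hY 0).aemeasurable, by rw [hlaw, hlaw]⟩
  have hint : Integrable (Y 0) π := by
    refine (integrable_map_measure aestronglyMeasurable_id (hY 0).aemeasurable).1 ?_
    exact hlaw 0 ▸ integrable_id_map_cast_poissonMeasure r
  have hmean : ∫ γ, Y 0 γ ∂π = r := by
    rw [← integral_id_map_cast_poissonMeasure r, ← hlaw 0,
      integral_map (f := fun x : ℝ => x) (hY 0).aemeasurable aestronglyMeasurable_id]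
  have hindep : Pairwise ((· ⟂ᵢ[π] ·) on Y) := fun i j hij =>
    ((h.2.2 ℕ A hA hA_disj).indepFun hij).comp ENNReal.measurable_toReal
      ENNReal.measurable_toReal
  exact hmean ▸ strong_law_ae_real Y hint hindep hident

end IsPoissonPP

lemma exists_measurable_ae_eq_intensity {X : Type*} [MeasurableSpace X] [StandardBorelSpace X]
    (σ : Measure X) [SigmaFinite σ] [NullSingletonClass σ] (hσ : σ univ = ∞) :
    ∃ T : Measure X → ℝ≥0, Measurable T ∧
      ∀ (z : ℝ≥0) (π : Measure (Measure X)), IsPoissonPP ((z : ℝ≥0∞) • σ) π →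
        ∀ᵐ γ ∂π, T γ = z := by
  obtain ⟨A, hA, hA_disj, hσA⟩ := exists_pairwise_disjoint_measure_eq_one hσ
  -- the `liminf` is a measurable stand-in for the limit, which exists a.s. by the strong law
  refine ⟨fun γ => (liminf (empiricalIntensity A γ) atTop).toNNReal, ?_, fun z π hπ => ?_⟩
  · exact (Measurable.liminf (measurable_empiricalIntensity hA)).real_toNNReal
  · filter_upwards [hπ.ae_tendsto_average hA hA_disj (r := z) fun n => by simp [hσA]] with γ hγ
    rw [hγ.liminf_eq, Real.toNNReal_coe]

theorem mixedPoisson_extreme_iff_pure_general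
    {X : Type*} [MeasurableSpace X] [StandardBorelSpace X]
    (σ : Measure X) [SigmaFinite σ] [NullSingletonClass σ] (hσ : σ Set.univ = ⊤)
    (P : ℝ≥0 → Measure (Measure X)) (hPm : Measurable P)
    (hP : ∀ z : ℝ≥0, IsPoissonPP ((z : ℝ≥0∞) • σ) (P z))
    (lam : Measure ℝ≥0) :
    MeasureExtremePoint
        {μ : Measure (Measure X) |
          ∃ lam' : Measure ℝ≥0, IsProbabilityMeasure lam' ∧ μ = lam'.bind P}
        (lam.bind P)
      ↔ ∃ z : ℝ≥0, lam = MeasureTheory.Measure.dirac z := by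
  obtain ⟨T, hT, hTP⟩ := exists_measurable_ae_eq_intensity σ hσ
  have (z : ℝ≥0) : IsProbabilityMeasure (P z) := (hP z).1
  have hinj := Measure.bind_injective_of_ae_eq hPm hT fun z => hTP z _ (hP z)
  have hS : {μ : Measure (Measure X) |
        ∃ lam' : Measure ℝ≥0, IsProbabilityMeasure lam' ∧ μ = lam'.bind P} =
      (fun l : Measure ℝ≥0 => l.bind P) '' {l | IsProbabilityMeasure l} := by
    ext; simp [eq_comm]
  rw [hS, measureExtremePoint_image_iff hinj fun t μ₁ μ₂ => by
      rw [Measure.add_bind _ _ hPm, Measure.bind_smul, Measure.bind_smul],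
    measureExtremePoint_isProbabilityMeasure_iff]

/-- A mixed Poisson measure `μ_{λ,σ} = ∫ π_{zσ} λ(dz)` (with `σ` an infinite, σ-finite
diffuse intensity) is an extreme point of the convex set of mixed Poisson measures with
intensity proportional to `σ` if and only if `λ = δ_z` for some `z ∈ [0,∞)`, i.e. the
extreme points are exactly the pure Poisson measures `π_{zσ}`. -/
theorem mixedPoisson_extreme_iff_pure
    {X : Type*} [MeasurableSpace X] [StandardBorelSpace X]
    (σ : Measure X) [SigmaFinite σ] [NullSingletonClass σ] (hσ : σ Set.univ = ⊤)
    (P : ℝ≥0 → Measure (Measure X)) (hPm : Measurable P)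
    (hP : ∀ z : ℝ≥0, IsPoissonPP ((z : ℝ≥0∞) • σ) (P z))
    (lam : Measure ℝ≥0) [IsProbabilityMeasure lam] :
    MeasureExtremePoint
        {μ : Measure (Measure X) |
          ∃ lam' : Measure ℝ≥0, IsProbabilityMeasure lam' ∧ μ = lam'.bind P}
        (lam.bind P)
      ↔ ∃ z : ℝ≥0, lam = MeasureTheory.Measure.dirac z :=
  mixedPoisson_extreme_iff_pure_general σ hσ P hPm hP lam
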